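/- arXiv:2309.13800 — 4 statements merged into one kernel-verified Lean document; each statement's English description precedes it below -/
import Mathlib

section
/- Every maximal clique-partition of a finite undirected graph G is represented by a configuration, i.e., for every maximal clique-partition P there exists a function assigning to each maximal clique index i ∈ [m] a set C_i ⊆ C̄_i (possibly empty), such that the nonempty C_i are exactly the cliques of P. -/
open Classical

variable {V : Type*}

/-- A clique in the paper's sense: a nonempty set of pairwise adjacent vertices. -/
def IsPClique (G : SimpleGraph V) (s : Set V) : Prop := s.Nonempty ∧ G.IsClique s

/-- A maximal clique: a clique not properly contained in another clique. -/
def IsMaxPClique (G : SimpleGraph V) (s : Set V) : Prop :=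
  IsPClique G s ∧ ∀ t, IsPClique G t → s ⊆ t → s = t

/-- A clique-partition of `G`: a partition of the vertex set into cliques. -/
def IsCliquePartition (G : SimpleGraph V) (P : Set (Set V)) : Prop :=
  (∀ C ∈ P, IsPClique G C) ∧ ∀ v : V, ∃! C, C ∈ P ∧ v ∈ C

/-- A maximal clique-partition: no two distinct members have a union that is a clique. -/
def IsMaxCliquePartition (G : SimpleGraph V) (P : Set (Set V)) : Prop :=
  IsCliquePartition G P ∧ ∀ C ∈ P, ∀ C' ∈ P, C ≠ C' → ¬ G.IsClique (C ∪ C')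

/-- `Cbar` is an enumeration (without repetitions) of all maximal cliques of `G`. -/
def EnumeratesMaxCliques (G : SimpleGraph V) {m : ℕ} (Cbar : Fin m → Set V) : Prop :=
  Function.Injective Cbar ∧ ∀ s, IsMaxPClique G s ↔ ∃ i, Cbar i = s

/-- A configuration w.r.t. the enumeration `Cbar`: componentwise subsets covering all vertices. -/
def IsConfiguration {m : ℕ} (Cbar C : Fin m → Set V) : Prop :=
  (∀ i, C i ⊆ Cbar i) ∧ (⋃ i, C i) = Set.univ

/-- The clique cover represented by a configuration: its nonempty components. -/
def reprOf {m : ℕ} (C : Fin m → Set V) : Set (Set V) :=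
  {s | ∃ i, C i = s ∧ s.Nonempty}

/-- Every clique in a finite graph extends to a maximal clique. -/
lemma exists_maxPClique_superset [Fintype V] (G : SimpleGraph V) (D : Set V)
    (hD : IsPClique G D) : ∃ M, IsMaxPClique G M ∧ D ⊆ M := by
  classical
  let S : Set (Set V) := {t | IsPClique G t ∧ D ⊆ t}
  obtain ⟨M, hMS, hmax⟩ := Set.Finite.exists_maximalFor id S (Set.toFinite S)
    ⟨D, hD, subset_rfl⟩
  refine ⟨M, ⟨hMS.1, ?_⟩, hMS.2⟩
  intro t ht hMt
  exact Set.Subset.antisymm hMt (hmax ⟨ht, hMS.2.trans hMt⟩ hMt)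

theorem stmt_0 [Fintype V] (G : SimpleGraph V) {m : ℕ} (Cbar : Fin m → Set V)
    (hE : EnumeratesMaxCliques G Cbar) (P : Set (Set V))
    (hP : IsMaxCliquePartition G P) :
    ∃ C : Fin m → Set V, IsConfiguration Cbar C ∧ reprOf C = P := by
  classical
  have hcl : ∀ D ∈ P, IsPClique G D := hP.1.1
  choose M hM hDM using fun D (hD : D ∈ P) =>
    exists_maxPClique_superset G D (hcl D hD)
  choose idx hidx using fun D (hD : D ∈ P) => (hE.2 (M D hD)).mp (hM D hD)
  set C : Fin m → Set V := fun i => {v | ∃ D, ∃ h : D ∈ P, idx D h = i ∧ v ∈ D} with hC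
  -- key: for D ∈ P, C (idx D hD) = D
  have key : ∀ D (hD : D ∈ P), C (idx D hD) = D := by
    intro D hD
    apply Set.Subset.antisymm
    · rintro v ⟨D', hD', hi, hv⟩
      have hDD' : D = D' := by
        by_contra hne
        apply hP.2 D hD D' hD' hne
        have hclM : G.IsClique (Cbar (idx D hD)) := by
          rw [hidx D hD]; exact (hM D hD).1.2
        apply hclM.subset
        rw [hidx D hD]
        apply Set.union_subset (hDM D hD)
        calc D' ⊆ M D' hD' := hDM D' hD'
          _ = Cbar (idx D' hD') := (hidx D' hD').symm
          _ = Cbar (idx D hD) := by rw [hi]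
          _ = M D hD := hidx D hD
      rw [hDD']; exact hv
    · intro v hv
      exact ⟨D, hD, rfl, hv⟩
  refine ⟨C, ⟨?_, ?_⟩, ?_⟩
  · rintro i v ⟨D, hD, hi, hv⟩
    have : v ∈ Cbar (idx D hD) := by
      rw [hidx D hD]; exact hDM D hD hv
    rwa [hi] at this
  · apply Set.eq_univ_of_forall
    intro v
    obtain ⟨D, ⟨hD, hv⟩, -⟩ := hP.1.2 v
    exact Set.mem_iUnion.mpr ⟨idx D hD, D, hD, rfl, hv⟩
  · ext s
    constructor
    · rintro ⟨i, hCi, hne⟩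
      obtain ⟨v, hv⟩ := hne
      rw [← hCi] at hv
      obtain ⟨D, hD, hi, -⟩ := hv
      have : C i = D := by rw [← hi]; exact key D hD
      rw [← hCi, this]; exact hD
    · intro hs
      exact ⟨idx s hs, key s hs, (hcl s hs).1⟩
end

section
/- For every maximal clique-partition P of G there is exactly one configuration [C_1,…,C_m] representing P that satisfies the normalization condition: for all 1 ≤ j < i ≤ m, if C_j ≠ ∅ then C_j is not a subset of C̄_i. -/
open Classical

variable {V : Type*}

lemma exists_max_containing [Fintype V] (G : SimpleGraph V) {s : Set V}
    (hs : IsPClique G s) : ∃ t, IsMaxPClique G t ∧ s ⊆ t := by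
  have hfin : {t : Set V | IsPClique G t ∧ s ⊆ t}.Finite := Set.toFinite _
  obtain ⟨t, ht, hmax⟩ := Set.Finite.exists_maximalFor id _ hfin ⟨s, hs, subset_rfl⟩
  exact ⟨t, ⟨ht.1, fun u hu htu => htu.antisymm (hmax ⟨hu, ht.2.trans htu⟩ htu)⟩, ht.2⟩

theorem stmt_4 [Fintype V] (G : SimpleGraph V) {m : ℕ} (Cbar : Fin m → Set V)
    (hE : EnumeratesMaxCliques G Cbar) (P : Set (Set V))
    (hP : IsMaxCliquePartition G P) :
    ∃! C : Fin m → Set V, IsConfiguration Cbar C ∧ reprOf C = P ∧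
      ∀ j i : Fin m, j < i → (C j).Nonempty → ¬ C j ⊆ Cbar i := by
  classical
  have hCbar : ∀ i, IsMaxPClique G (Cbar i) := fun i => (hE.2 _).mpr ⟨i, rfl⟩
  -- distinct members of P can't both fit in the same maximal clique
  have key : ∀ s ∈ P, ∀ s' ∈ P, ∀ i : Fin m, s ⊆ Cbar i → s' ⊆ Cbar i → s = s' := by
    intro s hs s' hs' i h h'
    by_contra hne
    exact hP.2 s hs s' hs' hne (((hCbar i).1.2).subset (Set.union_subset h h'))
  set Q : Set V → Fin m → Prop :=
    fun s i => s ∈ P ∧ s ⊆ Cbar i ∧ ∀ j, s ⊆ Cbar j → j ≤ i with hQdef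
  have hex : ∀ s ∈ P, ∃ i, Q s i := by
    intro s hs
    obtain ⟨t, ht, hst⟩ := exists_max_containing G (hP.1.1 s hs)
    obtain ⟨i0, hi0⟩ := (hE.2 t).mp ht
    set T := Finset.univ.filter (fun i => s ⊆ Cbar i) with hT
    have hi0T : i0 ∈ T := by simp only [hT, Finset.mem_filter, Finset.mem_univ, true_and]
                             rw [hi0]; exact hst
    have hTne : T.Nonempty := ⟨i0, hi0T⟩
    refine ⟨T.max' hTne, hs, ?_, ?_⟩
    · have := T.max'_mem hTne
      simpa [hT] using this
    · intro j hj
      exact T.le_max' j (by simp [hT, hj])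
  have hidx : ∀ s i i', Q s i → Q s i' → i = i' :=
    fun s i i' h h' => le_antisymm (h'.2.2 i h.2.1) (h.2.2 i' h'.2.1)
  set C : Fin m → Set V := fun i => ⋃₀ {s | Q s i} with hCdef
  have hCval : ∀ i s, Q s i → C i = s := by
    intro i s h
    apply subset_antisymm
    · intro x hx
      obtain ⟨s', hs', hxs'⟩ := hx
      rwa [key s' hs'.1 s h.1 i hs'.2.1 h.2.1] at hxs'
    · exact Set.subset_sUnion_of_mem h
  have hCsub : ∀ i, C i ⊆ Cbar i := by
    intro i x hx
    obtain ⟨s', hs', hxs'⟩ := hx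
    exact hs'.2.1 hxs'
  have hrepr : reprOf C = P := by
    ext s
    constructor
    · rintro ⟨i, hCi, hne⟩
      obtain ⟨x, hx⟩ := hne
      rw [← hCi] at hx
      obtain ⟨s', hs', _⟩ := hx
      rw [← hCi, hCval i s' hs']
      exact hs'.1
    · intro hs
      obtain ⟨i, hQi⟩ := hex s hs
      exact ⟨i, hCval i s hQi, (hP.1.1 s hs).1⟩
  refine ⟨C, ⟨⟨hCsub, ?_⟩, hrepr, ?_⟩, ?_⟩
  · ext v
    simp only [Set.mem_iUnion, Set.mem_univ, iff_true]
    obtain ⟨s, ⟨hsP, hvs⟩, -⟩ := hP.1.2 v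
    obtain ⟨i, hQi⟩ := hex s hsP
    exact ⟨i, (hCval i s hQi).symm ▸ hvs⟩
  · intro j i hji hne hsub
    obtain ⟨x, hx⟩ := hne
    obtain ⟨s', hs', hxs'⟩ := hx
    have : C j = s' := hCval j s' hs'
    rw [this] at hsub
    exact absurd (hs'.2.2 i hsub) (not_le.mpr hji)
  · -- uniqueness
    rintro D ⟨⟨hDsub, hDcov⟩, hDrepr, hDnorm⟩
    have hDQ : ∀ i, (D i).Nonempty → Q (D i) i := by
      intro i hne
      refine ⟨hDrepr ▸ ⟨i, rfl, hne⟩, hDsub i, ?_⟩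
      intro j hj
      by_contra hnot
      exact hDnorm i j (not_le.mp hnot) hne hj
    funext i
    by_cases hne : (D i).Nonempty
    · exact ((hCval i (D i) (hDQ i hne))).symm
    · rw [Set.not_nonempty_iff_eq_empty] at hne
      rw [hne]
      by_contra hC
      have hCne : (C i).Nonempty := by
        rcases Set.eq_empty_or_nonempty (C i) with h | h
        · exact absurd h.symm hC
        · exact h
      obtain ⟨x, hx⟩ := hCne
      obtain ⟨s', hs', hxs'⟩ := hx
      -- s' ∈ P = reprOf D, so s' = D i' for some i', nonempty
      have hs'P : s' ∈ P := hs'.1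
      rw [← hDrepr] at hs'P
      obtain ⟨i', hDi', hs'ne⟩ := hs'P
      have hQ' : Q s' i' := hDi' ▸ hDQ i' (hDi'.symm ▸ hs'ne)
      have : i = i' := hidx s' i i' hs' hQ'
      rw [← this] at hDi'
      rw [hne] at hDi'
      exact hs'ne.ne_empty hDi'.symm
end

section
/- The number of maximal clique-partitions of a finite undirected graph G with vertices v_1,…,v_n is at most ∏_{i=1}^n d(v_i), where d(v) is the number of maximal cliques of G containing v. -/
open Classical

variable {V : Type*}

/-- Every clique of a finite graph extends to a maximal clique. -/
lemma exists_max_superset [Fintype V] (G : SimpleGraph V) {C : Set V}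
    (h : IsPClique G C) : ∃ s, IsMaxPClique G s ∧ C ⊆ s := by
  have hfin : {t : Set V | IsPClique G t ∧ C ⊆ t}.Finite := Set.toFinite _
  obtain ⟨t, ht, hmax⟩ :=
    Set.Finite.exists_maximalFor id _ hfin ⟨C, h, subset_rfl⟩
  refine ⟨t, ⟨ht.1, ?_⟩, ht.2⟩
  intro t' ht' hsub
  exact hsub.antisymm (hmax ⟨ht', ht.2.trans hsub⟩ hsub)

theorem stmt_7 [Fintype V] (G : SimpleGraph V) {m : ℕ} (Cbar : Fin m → Set V)
    (hE : EnumeratesMaxCliques G Cbar) :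
    {P : Set (Set V) | IsMaxCliquePartition G P}.ncard ≤
      ∏ v : V, ({i : Fin m | v ∈ Cbar i}).ncard := by
  classical
  set T : Type _ := {P : Set (Set V) // IsMaxCliquePartition G P} with hT
  -- the block of a vertex
  have hblkex : ∀ (P : T) (v : V), ∃ C, C ∈ P.1 ∧ v ∈ C := fun P v => (P.2.1.2 v).exists
  let blk : T → V → Set V := fun P v => (hblkex P v).choose
  have hblk : ∀ (P : T) (v : V), blk P v ∈ P.1 ∧ v ∈ blk P v :=
    fun P v => (hblkex P v).choose_spec
  have hblkuniq : ∀ (P : T) (v : V) (C : Set V), C ∈ P.1 → v ∈ C → C = blk P v := by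
    intro P v C hC hv
    obtain ⟨D, _, hD⟩ := P.2.1.2 v
    rw [hD C ⟨hC, hv⟩, hD (blk P v) (hblk P v)]
  have hblkclique : ∀ (P : T) (v : V), IsPClique G (blk P v) :=
    fun P v => P.2.1.1 _ (hblk P v).1
  -- an index of a maximal clique containing the block
  have hfex : ∀ (P : T) (v : V), ∃ i, blk P v ⊆ Cbar i := by
    intro P v
    obtain ⟨s, hs, hsub⟩ := exists_max_superset G (hblkclique P v)
    obtain ⟨i, hi⟩ := (hE.2 s).1 hs
    exact ⟨i, hi ▸ hsub⟩
  let f : T → V → Fin m := fun P v => (hfex P v).choose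
  have hf : ∀ (P : T) (v : V), blk P v ⊆ Cbar (f P v) := fun P v => (hfex P v).choose_spec
  have hCbarclique : ∀ i, G.IsClique (Cbar i) := fun i =>
    ((hE.2 (Cbar i)).2 ⟨i, rfl⟩).1.2
  -- key: the block is recovered from f
  have hkey : ∀ (P : T) (v : V), blk P v = {w | f P w = f P v} := by
    intro P v
    ext w
    constructor
    · intro hw
      have : blk P v = blk P w := hblkuniq P w _ (hblk P v).1 hw
      simp only [Set.mem_setOf_eq, f]
      congr 1
      rw [this]
    · intro hw
      have h1 : blk P w ⊆ Cbar (f P v) := hw ▸ hf P w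
      have h2 : G.IsClique (blk P w ∪ blk P v) :=
        (hCbarclique (f P v)).subset (Set.union_subset h1 (hf P v))
      by_cases heq : blk P w = blk P v
      · exact heq ▸ (hblk P w).2
      · exact absurd h2 (P.2.2 _ (hblk P w).1 _ (hblk P v).1 heq)
  -- the injection
  let Φ : T → ∀ v : V, {i : Fin m | v ∈ Cbar i} := fun P v =>
    ⟨f P v, hf P v (hblk P v).2⟩
  have hinj : Function.Injective Φ := by
    intro P Q h
    have hfeq : ∀ v, f P v = f Q v := fun v =>
      congrArg Subtype.val (congrFun h v)
    have hbeq : ∀ v, blk P v = blk Q v := by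
      intro v
      rw [hkey P v, hkey Q v]
      ext w; simp [hfeq]
    apply Subtype.ext
    ext C
    constructor
    · intro hC
      obtain ⟨v, hv⟩ := (P.2.1.1 C hC).1
      have : C = blk P v := hblkuniq P v C hC hv
      rw [this, hbeq]
      exact (hblk Q v).1
    · intro hC
      obtain ⟨v, hv⟩ := (Q.2.1.1 C hC).1
      have : C = blk Q v := hblkuniq Q v C hC hv
      rw [this, ← hbeq]
      exact (hblk P v).1
  calc {P : Set (Set V) | IsMaxCliquePartition G P}.ncard
      = Nat.card T := (Nat.card_coe_set_eq _).symm
    _ ≤ Nat.card (∀ v : V, {i : Fin m | v ∈ Cbar i}) :=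
        Nat.card_le_card_of_injective Φ hinj
    _ = ∏ v : V, Nat.card {i : Fin m | v ∈ Cbar i} := Nat.card_pi
    _ = ∏ v : V, ({i : Fin m | v ∈ Cbar i}).ncard :=
        Finset.prod_congr rfl fun v _ => Nat.card_coe_set_eq _
end

section
/- The upper bound ∏_{v∈V} d(v) on the number of maximal clique-partitions is attained: the graph whose vertex set is {p_1,…,p_n, t, f} and whose maximal cliques are C_1 = {p_1,…,p_n, t} and C_2 = {p_1,…,p_n, f} (with t and f not adjacent) has exactly 2^n maximal clique-partitions. -/
open Classical

variable {V : Type*}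

/-- The graph on `p₁,…,pₙ,t,f`: all `pᵢ` pairwise adjacent and adjacent to both `t` and `f`,
with `t` and `f` not adjacent. -/
def boolGraph (n : ℕ) : SimpleGraph (Fin n ⊕ Bool) :=
  SimpleGraph.fromRel (fun x y => x.isLeft = true ∨ y.isLeft = true)

lemma bg_adj (n : ℕ) (x y : Fin n ⊕ Bool) :
    (boolGraph n).Adj x y ↔ x ≠ y ∧ (x.isLeft ∨ y.isLeft) := by
  rw [boolGraph, SimpleGraph.fromRel_adj]
  tauto

lemma bg_clique_of {n : ℕ} {s : Set (Fin n ⊕ Bool)}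
    (h : Sum.inr true ∉ s ∨ Sum.inr false ∉ s) : (boolGraph n).IsClique s := by
  intro x hx y hy hxy
  rw [bg_adj]
  refine ⟨hxy, ?_⟩
  rcases x with a | a
  · left; rfl
  · rcases y with b | b
    · right; rfl
    · exfalso
      cases a <;> cases b <;> simp_all

lemma bg_not_clique {n : ℕ} {s : Set (Fin n ⊕ Bool)}
    (hT : Sum.inr true ∈ s) (hF : Sum.inr false ∈ s) : ¬ (boolGraph n).IsClique s := by
  intro h
  have := h hT hF (by simp)
  rw [bg_adj] at this
  simp at this

/-- The maximal clique-partition associated to a subset of the `pᵢ`s. -/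
def bPart (n : ℕ) (s : Set (Fin n)) : Set (Set (Fin n ⊕ Bool)) :=
  {Sum.inl '' s ∪ {Sum.inr true}, Sum.inl '' sᶜ ∪ {Sum.inr false}}

lemma bPart_isMax (n : ℕ) (s : Set (Fin n)) :
    IsMaxCliquePartition (boolGraph n) (bPart n s) := by
  set A := Sum.inl '' s ∪ {Sum.inr true} with hA
  set B := Sum.inl '' sᶜ ∪ {Sum.inr false} with hB
  have hFA : Sum.inr false ∉ A := by simp [hA]
  have hTB : Sum.inr true ∉ B := by simp [hB]
  have hTA : Sum.inr true ∈ A := by simp [hA]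
  have hFB : Sum.inr false ∈ B := by simp [hB]
  refine ⟨⟨?_, ?_⟩, ?_⟩
  · rintro C (rfl | rfl)
    · exact ⟨⟨_, hTA⟩, bg_clique_of (Or.inr hFA)⟩
    · exact ⟨⟨_, hFB⟩, bg_clique_of (Or.inl hTB)⟩
  · rintro (a | b)
    · by_cases ha : a ∈ s
      · refine ⟨A, ⟨Or.inl rfl, by simp [hA, ha]⟩, ?_⟩
        rintro C ⟨(rfl | rfl), hmem⟩
        · rfl
        · exfalso; simp [hB] at hmem; exact hmem ha
      · refine ⟨B, ⟨Or.inr rfl, by simp [hB, ha]⟩, ?_⟩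
        rintro C ⟨(rfl | rfl), hmem⟩
        · exfalso; simp [hA] at hmem; exact ha hmem
        · rfl
    · cases b
      · refine ⟨B, ⟨Or.inr rfl, hFB⟩, ?_⟩
        rintro C ⟨(rfl | rfl), hmem⟩
        · exact absurd hmem hFA
        · rfl
      · refine ⟨A, ⟨Or.inl rfl, hTA⟩, ?_⟩
        rintro C ⟨(rfl | rfl), hmem⟩
        · rfl
        · exact absurd hmem hTB
  · rintro C (rfl | rfl) C' (rfl | rfl) hne
    · exact absurd rfl hne
    · exact bg_not_clique (Or.inl hTA) (Or.inr hFB)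
    · exact bg_not_clique (Or.inr hTA) (Or.inl hFB)
    · exact absurd rfl hne

lemma bPart_inj (n : ℕ) : Function.Injective (bPart n) := by
  intro s s' h
  have hmem : (Sum.inl '' s ∪ {Sum.inr true} : Set (Fin n ⊕ Bool)) ∈ bPart n s' := by
    rw [← h]; exact Or.inl rfl
  rcases hmem with heq | heq
  · ext a
    constructor
    · intro ha
      have : (Sum.inl a : Fin n ⊕ Bool) ∈ Sum.inl '' s' ∪ {Sum.inr true} := by
        rw [← heq]; exact Or.inl ⟨a, ha, rfl⟩
      simpa using this
    · intro ha
      have : (Sum.inl a : Fin n ⊕ Bool) ∈ Sum.inl '' s ∪ {Sum.inr true} := by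
        rw [heq]; exact Or.inl ⟨a, ha, rfl⟩
      simpa using this
  · exfalso
    have : (Sum.inr true : Fin n ⊕ Bool) ∈ Sum.inl '' s'ᶜ ∪ {Sum.inr false} := by
      rw [← heq]; simp
    simp at this

lemma bg_partitions (n : ℕ) :
    {P : Set (Set (Fin n ⊕ Bool)) | IsMaxCliquePartition (boolGraph n) P} =
      Set.range (bPart n) := by
  ext P
  simp only [Set.mem_setOf_eq, Set.mem_range]
  constructor
  · rintro ⟨⟨hcl, hcov⟩, hmax⟩
    obtain ⟨S, ⟨hSP, hTS⟩, hSuniq⟩ := hcov (Sum.inr true)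
    obtain ⟨Fp, ⟨hFP, hFF⟩, hFuniq⟩ := hcov (Sum.inr false)
    have hFnotS : Sum.inr false ∉ S := fun hFS =>
      bg_not_clique hTS hFS (hcl S hSP).2
    have hTnotF : Sum.inr true ∉ Fp := fun hTF =>
      bg_not_clique hTF hFF (hcl Fp hFP).2
    have hSF : S ≠ Fp := fun h => hTnotF (h ▸ hTS)
    have hmem : ∀ C ∈ P, C = S ∨ C = Fp := by
      intro C hC
      by_contra hcon
      push_neg at hcon
      refine hmax C hC S hSP hcon.1 (bg_clique_of (Or.inr ?_))
      rintro (hFC | hFS)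
      · exact hcon.2 (hFuniq C ⟨hC, hFC⟩)
      · exact hFnotS hFS
    -- the set of left vertices in S
    refine ⟨{a | Sum.inl a ∈ S}, ?_⟩
    have hSeq : S = Sum.inl '' {a | Sum.inl a ∈ S} ∪ {Sum.inr true} := by
      ext v
      rcases v with a | b
      · simp
      · cases b
        · simp [hFnotS]
        · simp [hTS]
    have hFeq : Fp = Sum.inl '' {a | Sum.inl a ∈ S}ᶜ ∪ {Sum.inr false} := by
      ext v
      rcases v with a | b
      · simp only [Set.mem_union, Set.mem_image, Set.mem_compl_iff, Set.mem_setOf_eq,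
          Set.mem_singleton_iff]
        constructor
        · intro haF
          refine Or.inl ⟨a, fun haS => ?_, rfl⟩
          obtain ⟨C0, _, huniq⟩ := hcov (Sum.inl a)
          exact hSF ((huniq S ⟨hSP, haS⟩).trans (huniq Fp ⟨hFP, haF⟩).symm)
        · rintro (⟨a', ha', heq⟩ | h)
          · obtain rfl := Sum.inl_injective heq
            obtain ⟨C0, ⟨hC0P, haC0⟩, _⟩ := hcov (Sum.inl a')
            rcases hmem C0 hC0P with rfl | rfl
            · exact absurd haC0 ha'
            · exact haC0
          · exact absurd h (by simp)
      · cases b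
        · simp [hFF]
        · simp [hTnotF]
    rw [bPart, ← hSeq, ← hFeq]
    ext C
    rw [Set.mem_insert_iff, Set.mem_singleton_iff]
    constructor
    · rintro (rfl | rfl)
      · exact hSP
      · exact hFP
    · exact hmem C

  · rintro ⟨s, rfl⟩
    exact bPart_isMax n s

theorem stmt_8 (n : ℕ) :
    {P : Set (Set (Fin n ⊕ Bool)) | IsMaxCliquePartition (boolGraph n) P}.ncard = 2 ^ n := by
  rw [bg_partitions, ← Set.image_univ, Set.ncard_image_of_injective _ (bPart_inj n),
    Set.ncard_univ, Nat.card_eq_fintype_card, Fintype.card_set, Fintype.card_fin]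
end
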